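/- arXiv:2408.10460 — 2 statements merged into one kernel-verified Lean document; each statement's English description precedes it below -/
import Mathlib

section
/- For all real q ≥ 70, the quantity S_1(q) = q(q+1+2g√q)/(4 t (1-t)(q-1)^2) · exp(((q+1+2g√q)/(1-t))·(3/q + (5q-3)/(q(q-1)^2))) with t = 0.17 satisfies S_1(q) ≤ (79.082 + 18.786 g)·e^{0.886 g} for every real g ≥ 0. -/
set_option maxHeartbeats 1000000


/-- For real `q ≥ 70` and real genus `g ≥ 0`, with `t = 0.17`,
`S₁(q) = q(q+1+2g√q)/(4t(1-t)(q-1)²) · exp(((q+1+2g√q)/(1-t))(3/q + (5q-3)/(q(q-1)²)))`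
is at most `(79.082 + 18.786 g) e^{0.886 g}`. -/
theorem stmt_12 (q g : ℝ) (hq : 70 ≤ q) (hg : 0 ≤ g) :
    q * (q + 1 + 2 * g * Real.sqrt q) / (4 * 0.17 * (1 - 0.17) * (q - 1) ^ 2) *
      Real.exp ((q + 1 + 2 * g * Real.sqrt q) / (1 - 0.17) *
        (3 / q + (5 * q - 3) / (q * (q - 1) ^ 2)))
    ≤ (79.082 + 18.786 * g) * Real.exp (0.886 * g) := by
  have hq0 : (0:ℝ) < q := by linarith
  have hq1 : (1:ℝ) < q := by linarith
  have hqm : (0:ℝ) < (q - 1) ^ 2 := by nlinarith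
  set s := Real.sqrt q with hs_def
  have hs2 : s ^ 2 = q := Real.sq_sqrt hq0.le
  have hs0 : (0:ℝ) ≤ s := Real.sqrt_nonneg q
  have hs : (8.366:ℝ) ≤ s := by nlinarith [hs2, hs0]
  have h86 : (0:ℝ) ≤ s - 8.366 := by linarith
  -- simplify the inner sum
  have hinner : 3 / q + (5 * q - 3) / (q * (q - 1) ^ 2) = (3 * q - 1) / (q - 1) ^ 2 := by
    have h0 : q ≠ 0 := ne_of_gt hq0
    have h1 : q - 1 ≠ 0 := by intro h; nlinarith
    field_simp
    ring
  -- exponent bound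
  have hXnum1 : (q + 1) * (3 * q - 1) ≤ 3.1168 * (q - 1) ^ 2 := by
    nlinarith [sq_nonneg (q - 70)]
  have hXnum2 : 2 * s * (3 * q - 1) ≤ 0.73538 * (q - 1) ^ 2 := by
    rw [← hs2]
    nlinarith [mul_nonneg h86 (mul_nonneg (mul_nonneg hs0 hs0) hs0),
      mul_nonneg h86 (sq_nonneg s), mul_nonneg h86 hs0, h86]
  have hX : (q + 1 + 2 * g * s) / (1 - 0.17) * ((3 * q - 1) / (q - 1) ^ 2)
      ≤ 3.75519 + 0.886 * g := by
    rw [div_mul_div_comm, div_le_iff₀ (by nlinarith : (0:ℝ) < (1 - 0.17) * (q - 1) ^ 2)]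
    nlinarith [mul_le_mul_of_nonneg_left hXnum2 hg, hXnum1, mul_nonneg hg hqm.le]
  -- prefactor bound
  have hPnum1 : q * (q + 1) ≤ 1.044 * (q - 1) ^ 2 := by
    nlinarith [sq_nonneg (q - 70)]
  have hPnum2 : 2 * q * s ≤ 0.2478 * (q - 1) ^ 2 := by
    rw [← hs2]
    nlinarith [mul_nonneg h86 (mul_nonneg (mul_nonneg hs0 hs0) hs0),
      mul_nonneg h86 (sq_nonneg s), sq_nonneg s]
  have hP : q * (q + 1 + 2 * g * s) / (4 * 0.17 * (1 - 0.17) * (q - 1) ^ 2)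
      ≤ (1.044 + 0.2478 * g) / 0.5644 := by
    rw [div_le_div_iff₀ (by nlinarith : (0:ℝ) < 4 * 0.17 * (1 - 0.17) * (q - 1) ^ 2)
      (by norm_num : (0:ℝ) < 0.5644)]
    have := mul_le_mul_of_nonneg_left hPnum2 hg
    nlinarith [this, hPnum1, mul_nonneg hg hqm.le]
  have hPnn : (0:ℝ) ≤ q * (q + 1 + 2 * g * s) / (4 * 0.17 * (1 - 0.17) * (q - 1) ^ 2) := by
    apply div_nonneg
    · nlinarith [mul_nonneg hg hs0]
    · nlinarith
  -- numeric bound on exp 3.75519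
  have hE : Real.exp (3.75519:ℝ) ≤ 42.75 := by
    have h1 : (3.75519:ℝ) = 3 + 0.75519 := by norm_num
    have he1 : Real.exp 1 ≤ 2.7182818286 := Real.exp_one_lt_d9.le
    have he3 : Real.exp (3:ℝ) = Real.exp 1 ^ 3 := by
      rw [← Real.exp_nat_mul]; norm_num
    have he2 : Real.exp (0.75519:ℝ) ≤ 2.12802 := by
      have hb := Real.exp_bound' (x := (0.75519:ℝ)) (by norm_num) (by norm_num)
        (n := 8) (by norm_num)
      calc Real.exp (0.75519:ℝ) ≤ _ := hb
        _ ≤ 2.12802 := by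
          simp only [Finset.sum_range_succ, Finset.sum_range_zero]
          norm_num [Nat.factorial]
    have hepos : (0:ℝ) < Real.exp 1 := Real.exp_pos 1
    have he3' : Real.exp (3:ℝ) ≤ 2.7182818286 ^ 3 := by
      rw [he3]
      exact pow_le_pow_left₀ hepos.le he1 3
    calc Real.exp (3.75519:ℝ) = Real.exp 3 * Real.exp 0.75519 := by
          rw [← Real.exp_add]; norm_num
      _ ≤ 2.7182818286 ^ 3 * 2.12802 := by
          exact mul_le_mul he3' he2 (Real.exp_pos _).le (by positivity)
      _ ≤ 42.75 := by norm_num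
  -- combine
  rw [hinner]
  calc q * (q + 1 + 2 * g * s) / (4 * 0.17 * (1 - 0.17) * (q - 1) ^ 2) *
        Real.exp ((q + 1 + 2 * g * s) / (1 - 0.17) * ((3 * q - 1) / (q - 1) ^ 2))
      ≤ (1.044 + 0.2478 * g) / 0.5644 * Real.exp (3.75519 + 0.886 * g) :=
        mul_le_mul hP (Real.exp_le_exp.2 hX) (Real.exp_pos _).le (by positivity)
    _ = (1.044 + 0.2478 * g) / 0.5644 * Real.exp 3.75519 * Real.exp (0.886 * g) := by
        rw [Real.exp_add]; ring
    _ ≤ (79.082 + 18.786 * g) * Real.exp (0.886 * g) := by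
        have h1 : (1.044 + 0.2478 * g) / 0.5644 * Real.exp 3.75519
            ≤ (1.044 + 0.2478 * g) / 0.5644 * 42.75 :=
          mul_le_mul_of_nonneg_left hE (by positivity)
        have h2 : (1.044 + 0.2478 * g) / 0.5644 * 42.75 ≤ 79.082 + 18.786 * g := by
          rw [div_mul_eq_mul_div, div_le_iff₀ (by norm_num : (0:ℝ) < 0.5644)]
          nlinarith [hg]
        exact mul_le_mul_of_nonneg_right (h1.trans h2) (Real.exp_pos _).le
end

section
/- Let Q = ∏_{i=1}^{J} P_i^{ν_i} be a product of distinct nonzero prime ideals in a Dedekind domain R with finite quotients, and for an ideal H dividing Q_{j-1} = ∏_{i<j} P_i^{ν_i} define w(H) = ∏_{P_i | H} (1-δ_i)^{-1} with δ_i ∈ [0,1/2]. Then ∑_{H_1, H_2 | Q_{j-1}} w(lcm(H_1,H_2))/|H_1 ∩ H_2| ≤ ∏_{i<j} (1 + (1/(1-δ_i)) ∑_{ν≥1} (2ν+1)/|P_i|^ν). -/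
open scoped Classical

set_option maxHeartbeats 1000000
set_option linter.unusedSectionVars false

section helpers

variable {R : Type*} [CommRing R] [IsDedekindDomain R]

lemma aux_coprime {m : ℕ} (P : Fin m → Ideal R) (hprime : ∀ i, (P i).IsPrime)
    (hne : ∀ i, P i ≠ ⊥) (hinj : Function.Injective P) {i j : Fin m} (hij : i ≠ j)
    (a b : ℕ) : IsCoprime (P i ^ a) (P j ^ b) := by
  apply IsCoprime.pow
  rw [Ideal.isCoprime_iff_sup_eq]
  exact Ideal.IsMaximal.coprime_of_ne ((hprime i).isMaximal (hne i))
    ((hprime j).isMaximal (hne j)) (fun h => hij (hinj h))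

lemma aux_inf {m : ℕ} (P : Fin m → Ideal R) (hprime : ∀ i, (P i).IsPrime)
    (hne : ∀ i, P i ≠ ⊥) (hinj : Function.Injective P) (a b : Fin m → ℕ) :
    (∏ k, P k ^ a k) ⊓ (∏ k, P k ^ b k) = ∏ k, P k ^ max (a k) (b k) := by
  apply le_antisymm
  · have h1 : ∀ i ∈ Finset.univ, P i ^ max (a i) (b i) ∣
        (∏ k, P k ^ a k) ⊓ (∏ k, P k ^ b k) := by
      intro i _
      have h1 : (∏ k, P k ^ a k) ⊓ (∏ k, P k ^ b k) ≤ P i ^ a i :=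
        le_trans inf_le_left (Ideal.le_of_dvd (Finset.dvd_prod_of_mem _ (Finset.mem_univ i)))
      have h2 : (∏ k, P k ^ a k) ⊓ (∏ k, P k ^ b k) ≤ P i ^ b i :=
        le_trans inf_le_right (Ideal.le_of_dvd (Finset.dvd_prod_of_mem _ (Finset.mem_univ i)))
      rcases max_choice (a i) (b i) with h | h <;> rw [h]
      exacts [Ideal.dvd_iff_le.mpr h1, Ideal.dvd_iff_le.mpr h2]
    exact Ideal.le_of_dvd <| Finset.prod_dvd_of_coprime
      (fun i hi j hj hij => aux_coprime P hprime hne hinj hij _ _) h1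
  · have hd1 : ((∏ k, P k ^ a k) : Ideal R) ∣ ∏ k, P k ^ max (a k) (b k) :=
      Finset.prod_dvd_prod_of_dvd _ _ fun k _ => pow_dvd_pow _ (le_max_left _ _)
    have hd2 : ((∏ k, P k ^ b k) : Ideal R) ∣ ∏ k, P k ^ max (a k) (b k) :=
      Finset.prod_dvd_prod_of_dvd _ _ fun k _ => pow_dvd_pow _ (le_max_right _ _)
    exact le_inf (Ideal.le_of_dvd hd1) (Ideal.le_of_dvd hd2)

lemma aux_cardQuot_prod {ι : Type*} (s : Finset ι) (f : ι → Ideal R)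
    (h : ∀ i ∈ s, ∀ j ∈ s, i ≠ j → IsCoprime (f i) (f j)) :
    Submodule.cardQuot (∏ i ∈ s, f i) = ∏ i ∈ s, Submodule.cardQuot (f i) := by
  induction s using Finset.induction with
  | empty => simp [Ideal.one_eq_top]
  | @insert x s hx ih =>
    rw [Finset.prod_insert hx, Finset.prod_insert hx, cardQuot_mul_of_coprime, ih]
    · intro i hi j hj hij
      exact h i (Finset.mem_insert_of_mem hi) j (Finset.mem_insert_of_mem hj) hij
    · apply IsCoprime.prod_right
      intro j hj
      exact h x (Finset.mem_insert_self x s) j (Finset.mem_insert_of_mem hj)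
        (fun e => hx (e ▸ hj))

lemma aux_card {m : ℕ} (P : Fin m → Ideal R) (hprime : ∀ i, (P i).IsPrime)
    (hne : ∀ i, P i ≠ ⊥) (hinj : Function.Injective P) (a : Fin m → ℕ) :
    Nat.card (R ⧸ (∏ k, P k ^ a k)) = ∏ k, Nat.card (R ⧸ P k) ^ a k := by
  rw [← Submodule.cardQuot_apply, aux_cardQuot_prod _ _
    (fun i _ j _ hij => aux_coprime P hprime hne hinj hij _ _)]
  refine Finset.prod_congr rfl fun k _ => ?_
  haveI := hprime k
  rw [cardQuot_pow_of_prime (hne k), Submodule.cardQuot_apply]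

lemma aux_le {m : ℕ} (P : Fin m → Ideal R) (hprime : ∀ i, (P i).IsPrime)
    (hne : ∀ i, P i ≠ ⊥) (hinj : Function.Injective P) (c : Fin m → ℕ) (i : Fin m) :
    (∏ k, P k ^ c k) ≤ P i ↔ 1 ≤ c i := by
  constructor
  · intro h
    obtain ⟨k, -, hk⟩ := (Ideal.IsPrime.prod_le (hprime i)).mp h
    rcases Nat.eq_zero_or_pos (c k) with h0 | hpos
    · rw [h0, pow_zero, Ideal.one_eq_top, top_le_iff] at hk
      exact absurd hk (hprime i).ne_top
    · have hle : P k ≤ P i := Ideal.IsPrime.le_of_pow_le (hP := hprime i) hk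
      have : P k = P i :=
        ((hprime k).isMaximal (hne k)).eq_of_le (hprime i).ne_top hle
      rw [← hinj this]
      exact hpos
  · intro h
    calc (∏ k, P k ^ c k) ≤ P i ^ c i :=
          Ideal.dvd_iff_le.mp (Finset.dvd_prod_of_mem _ (Finset.mem_univ i))
      _ ≤ P i := Ideal.pow_le_self (by omega)

end helpers

lemma aux_count (g : ℕ → ℝ) (N : ℕ) :
    ∑ a ∈ Finset.range N, ∑ b ∈ Finset.range N, g (max a b)
      = ∑ n ∈ Finset.range N, (2 * (n : ℝ) + 1) * g n := by
  induction N with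
  | zero => simp
  | succ N ih =>
    rw [Finset.sum_range_succ (f := fun a => ∑ b ∈ Finset.range (N + 1), g (max a b)),
        Finset.sum_range_succ (f := fun n => (2 * (n : ℝ) + 1) * g n)]
    have hrow : ∀ a ∈ Finset.range N, ∑ b ∈ Finset.range (N + 1), g (max a b)
        = ∑ b ∈ Finset.range N, g (max a b) + g N := by
      intro a ha
      rw [Finset.sum_range_succ, Nat.max_eq_right (Finset.mem_range.mp ha).le]
    rw [Finset.sum_congr rfl hrow, Finset.sum_add_distrib, ih, Finset.sum_const,
        Finset.card_range, nsmul_eq_mul]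
    have hlast : ∑ b ∈ Finset.range (N + 1), g (max N b) = (N : ℝ) * g N + g N := by
      rw [Finset.sum_range_succ, Nat.max_self]
      congr 1
      rw [Finset.sum_congr rfl (fun b hb => by
            rw [Nat.max_eq_left (Finset.mem_range.mp hb).le]),
          Finset.sum_const, Finset.card_range, nsmul_eq_mul]
    rw [hlast]
    push_cast
    ring

lemma aux_summable {q : ℝ} (hq : 2 ≤ q) :
    Summable (fun n : ℕ => (2 * ((n : ℝ) + 1) + 1) / q ^ (n + 1)) := by
  have hq0 : 0 < q := by linarith
  have hr : ‖q⁻¹‖ < 1 := by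
    rw [Real.norm_eq_abs, abs_of_pos (by positivity)]
    exact inv_lt_one_of_one_lt₀ (by linarith)
  have A : Summable (fun n : ℕ => (n : ℝ) ^ 1 * q⁻¹ ^ n) :=
    summable_pow_mul_geometric_of_norm_lt_one 1 hr
  have B : Summable (fun n : ℕ => q⁻¹ ^ n) := summable_geometric_of_norm_lt_one hr
  refine ((A.mul_left (2 * q⁻¹)).add (B.mul_left (3 * q⁻¹))).congr fun n => ?_
  have h1 : q ^ (n + 1) ≠ 0 := by positivity
  rw [inv_pow]
  field_simp
  ring

lemma aux_factor {q : ℝ} (hq : 2 ≤ q) {δ : ℝ} (hδ0 : 0 ≤ δ) (hδ1 : δ ≤ 1 / 2) (N : ℕ) :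
    ∑ a : Fin (N + 1), ∑ b : Fin (N + 1),
      (if 1 ≤ max (a : ℕ) (b : ℕ) then (1 - δ)⁻¹ else 1) / q ^ max (a : ℕ) (b : ℕ)
      ≤ 1 + (1 - δ)⁻¹ * ∑' n : ℕ, (2 * ((n : ℝ) + 1) + 1) / q ^ (n + 1) := by
  have hq0 : 0 < q := by linarith
  have hδ : (0:ℝ) < 1 - δ := by linarith
  have hδ' : (0:ℝ) ≤ (1 - δ)⁻¹ := by positivity
  set g : ℕ → ℝ := fun n => (if 1 ≤ n then (1 - δ)⁻¹ else 1) / q ^ n with hg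
  have h1 : ∀ a : ℕ, ∑ b : Fin (N + 1), g (max a (b : ℕ))
      = ∑ b ∈ Finset.range (N + 1), g (max a b) :=
    fun a => Fin.sum_univ_eq_sum_range (fun b => g (max a b)) (N + 1)
  have h2 : ∑ a : Fin (N + 1), ∑ b : Fin (N + 1), g (max (a : ℕ) (b : ℕ))
      = ∑ a ∈ Finset.range (N + 1), ∑ b ∈ Finset.range (N + 1), g (max a b) := by
    simp only [h1]
    exact Fin.sum_univ_eq_sum_range (fun a => ∑ b ∈ Finset.range (N + 1), g (max a b)) (N + 1)
  rw [h2, aux_count, Finset.sum_range_succ']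
  have hf0 : (2 * ((0 : ℕ) : ℝ) + 1) * g 0 = 1 := by simp [hg]
  rw [hf0]
  have hterm : ∀ i ∈ Finset.range N, (2 * ((i + 1 : ℕ) : ℝ) + 1) * g (i + 1)
      = (1 - δ)⁻¹ * ((2 * ((i : ℝ) + 1) + 1) / q ^ (i + 1)) := by
    intro i _
    simp only [hg]
    rw [if_pos (by omega : 1 ≤ i + 1)]
    push_cast
    ring
  rw [Finset.sum_congr rfl hterm, ← Finset.mul_sum]
  have hsum : ∑ i ∈ Finset.range N, (2 * ((i : ℝ) + 1) + 1) / q ^ (i + 1)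
      ≤ ∑' n : ℕ, (2 * ((n : ℝ) + 1) + 1) / q ^ (n + 1) :=
    Summable.sum_le_tsum _ (fun i _ => by positivity) (aux_summable hq)
  have := mul_le_mul_of_nonneg_left hsum hδ'
  linarith

/-- Abstract form of the divisor-sum bound in Lemma 3.1: `P_1, …, P_m` are the distinct
nonzero primes dividing `Q_{j-1}`, with exponents `ν i ≥ 1`; divisors `H ∣ Q_{j-1}` are
parametrised by exponent vectors `e` with `e i ≤ ν i`, via `H(e) = ∏ i, P i ^ (e i)`, and
`H₁ ∩ H₂ = H(e₁) ⊓ H(e₂)`.  The weight is `w(H₁ ∩ H₂) = ∏_{P i ∣ H₁ ∩ H₂} (1 - δ i)⁻¹`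
(recall `P ∣ H ↔ H ≤ P`), and `|I| = card (R ⧸ I)`.  Then
`∑_{H₁,H₂ ∣ Q_{j-1}} w(H₁ ∩ H₂)/|H₁ ∩ H₂| ≤ ∏ i (1 + (1-δ i)⁻¹ ∑_{ν≥1} (2ν+1)/|P i|^ν)`. -/
theorem stmt_17 (R : Type*) [CommRing R] [IsDedekindDomain R]
    (hfin : ∀ I : Ideal R, I ≠ ⊥ → Finite (R ⧸ I))
    (m : ℕ) (P : Fin m → Ideal R) (hprime : ∀ i, (P i).IsPrime) (hne : ∀ i, P i ≠ ⊥)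
    (hinj : Function.Injective P)
    (ν : Fin m → ℕ) (hν : ∀ i, 1 ≤ ν i)
    (δ : Fin m → ℝ) (hδ : ∀ i, δ i ∈ Set.Icc (0 : ℝ) (1 / 2)) :
    ∑ e₁ : ∀ i, Fin (ν i + 1), ∑ e₂ : ∀ i, Fin (ν i + 1),
      (∏ i ∈ Finset.univ.filter
          (fun i : Fin m =>
            (∏ k, P k ^ (e₁ k : ℕ)) ⊓ (∏ k, P k ^ (e₂ k : ℕ)) ≤ P i),
          (1 - δ i)⁻¹) /
        (Nat.card (R ⧸ ((∏ k, P k ^ (e₁ k : ℕ)) ⊓ (∏ k, P k ^ (e₂ k : ℕ)))) : ℝ)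
    ≤ ∏ i : Fin m,
        (1 + (1 - δ i)⁻¹ *
          ∑' n : ℕ, (2 * ((n : ℝ) + 1) + 1) / (Nat.card (R ⧸ P i) : ℝ) ^ (n + 1)) := by
  have hq : ∀ i, (2 : ℝ) ≤ (Nat.card (R ⧸ P i) : ℝ) := by
    intro i
    haveI : Finite (R ⧸ P i) := hfin (P i) (hne i)
    haveI : Nontrivial (R ⧸ P i) := Ideal.Quotient.nontrivial_iff.mpr (hprime i).ne_top
    have h := Finite.one_lt_card (α := R ⧸ P i)
    exact_mod_cast h
  set g : Fin m → ℕ → ℝ := fun i n =>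
    (if 1 ≤ n then (1 - δ i)⁻¹ else 1) / (Nat.card (R ⧸ P i) : ℝ) ^ n with hg
  -- Step 1: rewrite each summand as a product over i
  have hsummand : ∀ e₁ e₂ : (∀ i, Fin (ν i + 1)),
      (∏ i ∈ Finset.univ.filter
          (fun i : Fin m =>
            (∏ k, P k ^ (e₁ k : ℕ)) ⊓ (∏ k, P k ^ (e₂ k : ℕ)) ≤ P i),
          (1 - δ i)⁻¹) /
        (Nat.card (R ⧸ ((∏ k, P k ^ (e₁ k : ℕ)) ⊓ (∏ k, P k ^ (e₂ k : ℕ)))) : ℝ)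
      = ∏ i, g i (max (e₁ i : ℕ) (e₂ i : ℕ)) := by
    intro e₁ e₂
    rw [aux_inf P hprime hne hinj, aux_card P hprime hne hinj]
    have hfil : (Finset.univ.filter
          (fun i : Fin m => (∏ k, P k ^ max (e₁ k : ℕ) (e₂ k : ℕ)) ≤ P i))
        = Finset.univ.filter (fun i : Fin m => 1 ≤ max (e₁ i : ℕ) (e₂ i : ℕ)) := by
      apply Finset.filter_congr
      intro i _
      simp only [aux_le P hprime hne hinj, eq_iff_iff]
    rw [hfil, Finset.prod_filter, Nat.cast_prod]
    rw [← Finset.prod_div_distrib]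
    refine Finset.prod_congr rfl fun i _ => ?_
    simp [hg]
  simp only [hsummand]
  -- Step 2: factor the double sum into a product
  let φ : ((∀ i, Fin (ν i + 1)) × (∀ i, Fin (ν i + 1))) ≃ (∀ i, Fin (ν i + 1) × Fin (ν i + 1)) :=
    { toFun := fun p i => (p.1 i, p.2 i)
      invFun := fun x => (fun i => (x i).1, fun i => (x i).2)
      left_inv := fun p => rfl
      right_inv := fun x => rfl }
  have hswap : ∑ e₁ : ∀ i, Fin (ν i + 1), ∑ e₂ : ∀ i, Fin (ν i + 1),
      ∏ i, g i (max (e₁ i : ℕ) (e₂ i : ℕ))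
      = ∏ i, ∑ p : Fin (ν i + 1) × Fin (ν i + 1), g i (max (p.1 : ℕ) (p.2 : ℕ)) := by
    rw [Fintype.prod_sum
      (f := fun i (p : Fin (ν i + 1) × Fin (ν i + 1)) => g i (max (p.1 : ℕ) (p.2 : ℕ)))]
    have h1 : ∑ p : ((∀ i, Fin (ν i + 1)) × (∀ i, Fin (ν i + 1))),
        ∏ i, g i (max (p.1 i : ℕ) (p.2 i : ℕ))
        = ∑ e₁ : ∀ i, Fin (ν i + 1), ∑ e₂ : ∀ i, Fin (ν i + 1),
          ∏ i, g i (max (e₁ i : ℕ) (e₂ i : ℕ)) := Fintype.sum_prod_type _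
    rw [← h1]
    exact Fintype.sum_equiv φ _ _ (fun p => rfl)
  rw [hswap]
  -- Step 3: bound each factor
  apply Finset.prod_le_prod
  · intro i _
    apply Finset.sum_nonneg
    intro p _
    have h0 : (0:ℝ) < Nat.card (R ⧸ P i) := by linarith [hq i]
    have hδi : (0:ℝ) < 1 - δ i := by have := (hδ i).2; linarith
    simp only [hg]
    split <;> positivity
  · intro i _
    simp only [hg]
    calc ∑ p : Fin (ν i + 1) × Fin (ν i + 1),
          (if 1 ≤ max (p.1 : ℕ) (p.2 : ℕ) then (1 - δ i)⁻¹ else 1) /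
            (Nat.card (R ⧸ P i) : ℝ) ^ max (p.1 : ℕ) (p.2 : ℕ)
        = ∑ a : Fin (ν i + 1), ∑ b : Fin (ν i + 1),
            (if 1 ≤ max (a : ℕ) (b : ℕ) then (1 - δ i)⁻¹ else 1) /
              (Nat.card (R ⧸ P i) : ℝ) ^ max (a : ℕ) (b : ℕ) := Fintype.sum_prod_type _
      _ ≤ _ := aux_factor (hq i) (hδ i).1 (hδ i).2 (ν i)
end
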